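/- arXiv:2212.11461 — 3 statements merged into one kernel-verified Lean document; each statement's English description precedes it below -/
import Mathlib

section
/- Let d ≥ 4 be an even integer. There exists a constant C > 0 such that for all s ∈ (0,1), s · ∫₀^π (sin θ)^(d-3) / (2(1-cos θ) + s)^(d/2) dθ ≤ C. -/
open Real intervalIntegral

theorem stmt_5 (d : ℕ) (hd : 4 ≤ d) (hde : Even d) :
    ∃ C > (0 : ℝ), ∀ s ∈ Set.Ioo (0 : ℝ) 1,
      s * ∫ θ in (0 : ℝ)..Real.pi,
        Real.sin θ ^ (d - 3) / (2 * (1 - Real.cos θ) + s) ^ (d / 2) ≤ C := by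
  obtain ⟨m, hm⟩ := hde
  have hm2 : 2 ≤ m := by omega
  set k := m - 2 with hk
  have hd3 : d - 3 = 2 * k + 1 := by omega
  have hd2 : d / 2 = k + 2 := by omega
  refine ⟨1, one_pos, ?_⟩
  rintro s ⟨hs0, hs1⟩
  set f : ℝ → ℝ := fun θ => Real.sin θ ^ (d - 3) / (2 * (1 - Real.cos θ) + s) ^ (d / 2)
    with hf
  set g : ℝ → ℝ := fun θ => Real.sin θ / (2 * (1 - Real.cos θ) + s) ^ 2 with hg
  have hden : ∀ θ : ℝ, 0 < 2 * (1 - Real.cos θ) + s := by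
    intro θ
    have := Real.cos_le_one θ
    nlinarith
  -- pointwise bound
  have hpt : ∀ θ ∈ Set.Icc (0 : ℝ) Real.pi, f θ ≤ g θ := by
    intro θ ⟨h0, hπ⟩
    have hsin : 0 ≤ Real.sin θ := Real.sin_nonneg_of_nonneg_of_le_pi h0 hπ
    set D := 2 * (1 - Real.cos θ) + s with hD
    have hDpos : 0 < D := hden θ
    have hsq : Real.sin θ ^ 2 ≤ D := by
      have h1 := Real.sin_sq_add_cos_sq θ
      have h2 := Real.cos_le_one θ
      have h3 := Real.neg_one_le_cos θ
      nlinarith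
    have h1 : Real.sin θ ^ (2 * k + 1) ≤ Real.sin θ * D ^ k := by
      calc Real.sin θ ^ (2 * k + 1) = Real.sin θ * (Real.sin θ ^ 2) ^ k := by
            rw [← pow_mul, ← pow_succ']
          _ ≤ Real.sin θ * D ^ k :=
            mul_le_mul_of_nonneg_left (pow_le_pow_left₀ (sq_nonneg _) hsq k) hsin
    have hDk : (0 : ℝ) < D ^ k := pow_pos hDpos k
    have hD2 : (0 : ℝ) < D ^ 2 := pow_pos hDpos 2
    calc f θ = Real.sin θ ^ (2 * k + 1) / (D ^ k * D ^ 2) := by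
          rw [hf, hd3, hd2]
          simp only [← pow_add]
          rfl
        _ ≤ (Real.sin θ * D ^ k) / (D ^ k * D ^ 2) := by
          apply div_le_div_of_nonneg_right h1 (by positivity) |>.trans_eq rfl
        _ = Real.sin θ / D ^ 2 := by
          field_simp
  -- integrability
  have hcf : ContinuousOn f (Set.Icc 0 Real.pi) := by
    apply ContinuousOn.div (by fun_prop) (by fun_prop)
    intro θ _
    exact pow_ne_zero _ (ne_of_gt (hden θ))
  have hcg : ContinuousOn g (Set.Icc 0 Real.pi) := by
    apply ContinuousOn.div (by fun_prop) (by fun_prop)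
    intro θ _
    exact pow_ne_zero _ (ne_of_gt (hden θ))
  have hif : IntervalIntegrable f MeasureTheory.volume 0 Real.pi :=
    (hcf.mono (by rw [Set.uIcc_of_le Real.pi_nonneg])).intervalIntegrable
  have hig : IntervalIntegrable g MeasureTheory.volume 0 Real.pi :=
    (hcg.mono (by rw [Set.uIcc_of_le Real.pi_nonneg])).intervalIntegrable
  have hmono : (∫ θ in (0:ℝ)..Real.pi, f θ) ≤ ∫ θ in (0:ℝ)..Real.pi, g θ :=
    intervalIntegral.integral_mono_on Real.pi_nonneg hif hig hpt
  -- compute the g-integral via FTC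
  have hftc : (∫ θ in (0:ℝ)..Real.pi, g θ)
      = (-(1/2) * (2 * (1 - Real.cos Real.pi) + s)⁻¹) - (-(1/2) * (2 * (1 - Real.cos 0) + s)⁻¹) := by
    apply intervalIntegral.integral_eq_sub_of_hasDerivAt
      (f := fun θ => -(1/2 : ℝ) * (2 * (1 - Real.cos θ) + s)⁻¹)
    · intro θ _
      have hD : HasDerivAt (fun θ : ℝ => 2 * (1 - Real.cos θ) + s) (2 * Real.sin θ) θ := by
        have h1 : HasDerivAt Real.cos (-Real.sin θ) θ := Real.hasDerivAt_cos θ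
        have h2 := ((h1.const_sub 1).const_mul 2).add_const s
        rw [neg_neg] at h2
        exact h2
      have hDne : (2 * (1 - Real.cos θ) + s) ≠ 0 := ne_of_gt (hden θ)
      have := (hD.inv hDne).const_mul (-(1/2 : ℝ))
      refine this.congr_deriv ?_
      rw [hg]
      field_simp
    · exact hig
  have hval : (∫ θ in (0:ℝ)..Real.pi, g θ) ≤ 1 / (2 * s) := by
    have e1 : (2 * (1 - Real.cos 0) + s) = s := by rw [Real.cos_zero]; ring
    rw [hftc, e1]
    have h4s : 0 < 2 * (1 - Real.cos Real.pi) + s := hden _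
    have hinv : 0 ≤ (2 * (1 - Real.cos Real.pi) + s)⁻¹ := le_of_lt (inv_pos.mpr h4s)
    have hA : -(1/2) * (2 * (1 - Real.cos Real.pi) + s)⁻¹ ≤ 0 := by nlinarith
    have h2s : (1:ℝ)/(2*s) = (1/2) * s⁻¹ := by field_simp
    rw [h2s]
    linarith
  calc s * ∫ θ in (0:ℝ)..Real.pi, f θ ≤ s * (1 / (2 * s)) :=
        mul_le_mul_of_nonneg_left (hmono.trans hval) (le_of_lt hs0)
      _ = 1/2 := by field_simp
      _ ≤ 1 := by norm_num
end

section
/- Let d ≥ 4 be an even integer. There exist constants M ≥ 1 and C > 0 such that for all s ≥ M, |∫₀^π cos θ · (sin θ)^(d-3) / (2(1-cos θ) + s)^(d/2) dθ| ≤ C / s^(d/2 + 1). -/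
open Real intervalIntegral

lemma zero_int (n : ℕ) : (∫ θ in (0:ℝ)..π, Real.cos θ * Real.sin θ ^ n) = 0 := by
  have h := integral_sin_pow_mul_cos_pow_odd (a := 0) (b := π) n 0
  simp only [mul_zero, zero_add, pow_one, Real.sin_zero, Real.sin_pi] at h
  rw [show (∫ θ in (0:ℝ)..π, Real.cos θ * Real.sin θ ^ n)
      = ∫ θ in (0:ℝ)..π, Real.sin θ ^ n * Real.cos θ by
    congr 1; ext θ; ring]
  rw [h, intervalIntegral.integral_same]

lemma pow_diff (k : ℕ) (s a : ℝ) (hs : 1 ≤ s) (hsa : s ≤ a) (h4 : a - s ≤ 4) :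
    1 / s ^ k - 1 / a ^ k ≤ 4 * k / s ^ (k + 1) := by
  have hs0 : (0:ℝ) < s := by linarith
  have ha0 : (0:ℝ) < a := by linarith
  have hsk : (0:ℝ) < s ^ k := pow_pos hs0 k
  have hak : (0:ℝ) < a ^ k := pow_pos ha0 k
  have key : a ^ k - s ^ k ≤ (a - s) * (k * a ^ (k - 1)) := by
    rcases Nat.eq_zero_or_pos k with hk | hk
    · subst hk; simp
    have hgs := geom_sum₂_mul a s k
    have hb : (∑ i ∈ Finset.range k, a ^ i * s ^ (k - 1 - i)) ≤ k * a ^ (k-1) := by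
      calc (∑ i ∈ Finset.range k, a ^ i * s ^ (k - 1 - i))
          ≤ ∑ i ∈ Finset.range k, a ^ i * a ^ (k - 1 - i) := by
            apply Finset.sum_le_sum
            intro i hi
            exact mul_le_mul_of_nonneg_left (pow_le_pow_left₀ hs0.le hsa _) (pow_nonneg ha0.le _)
        _ = ∑ i ∈ Finset.range k, a ^ (k - 1) := by
            apply Finset.sum_congr rfl
            intro i hi
            rw [← pow_add]
            congr 1
            have := Finset.mem_range.mp hi
            omega
        _ = k * a ^ (k - 1) := by simp [Finset.sum_const, nsmul_eq_mul]
    calc a ^ k - s ^ k = (∑ i ∈ Finset.range k, a ^ i * s ^ (k - 1 - i)) * (a - s) := hgs.symm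
      _ ≤ (k * a ^ (k-1)) * (a - s) := by
          apply mul_le_mul_of_nonneg_right hb (by linarith)
      _ = (a - s) * (k * a ^ (k - 1)) := by ring
  have h1 : 1 / s ^ k - 1 / a ^ k = (a ^ k - s ^ k) / (s ^ k * a ^ k) := by
    field_simp
  rw [h1]
  rcases Nat.eq_zero_or_pos k with hk | hk
  · subst hk; simp
  have hak1 : a ^ k = a ^ (k - 1) * a := by
    rw [← pow_succ]; congr 1; omega
  have haa : (0:ℝ) < a ^ (k-1) := pow_pos ha0 _
  calc (a ^ k - s ^ k) / (s ^ k * a ^ k)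
      ≤ ((a - s) * (k * a ^ (k - 1))) / (s ^ k * a ^ k) := by
        exact div_le_div_of_nonneg_right key (by positivity)
    _ ≤ 4 * k / s ^ (k + 1) := by
        rw [hak1]
        rw [div_le_div_iff₀ (by positivity) (by positivity)]
        have : (a - s) * (↑k * a ^ (k - 1)) * s ^ (k + 1)
             = ((a - s) * s) * (k * (a^(k-1) * s^k)) := by ring
        rw [this]
        have : 4 * ↑k * (s ^ k * (a ^ (k - 1) * a)) = (4 * a) * (k * (a^(k-1) * s^k)) := by ring
        rw [this]
        apply mul_le_mul_of_nonneg_right _ (by positivity)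
        nlinarith

theorem stmt_6 (d : ℕ) (hd : 4 ≤ d) (hde : Even d) :
    ∃ M ≥ (1 : ℝ), ∃ C > (0 : ℝ), ∀ s ≥ M,
      |∫ θ in (0 : ℝ)..Real.pi,
          Real.cos θ * Real.sin θ ^ (d - 3) / (2 * (1 - Real.cos θ) + s) ^ (d / 2)|
        ≤ C / s ^ (d / 2 + 1) := by
  set k := d / 2 with hkdef
  set n := d - 3 with hndef
  have hkpos : (0:ℝ) < (k:ℝ) := by
    have : 2 ≤ k := by omega
    exact_mod_cast (by omega : 0 < k)
  have hpi := Real.pi_pos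
  refine ⟨1, le_rfl, 4 * π * k, by positivity, ?_⟩
  intro s hs
  have hs0 : (0:ℝ) < s := lt_of_lt_of_le one_pos hs
  have haS : ∀ θ : ℝ, s ≤ 2 * (1 - Real.cos θ) + s := fun θ => by
    have := Real.cos_le_one θ; linarith
  have ha0 : ∀ θ : ℝ, (0:ℝ) < 2 * (1 - Real.cos θ) + s := fun θ => lt_of_lt_of_le hs0 (haS θ)
  have ha4 : ∀ θ : ℝ, (2 * (1 - Real.cos θ) + s) - s ≤ 4 := fun θ => by
    have := Real.neg_one_le_cos θ; linarith
  have hcf : Continuous fun θ => Real.cos θ * Real.sin θ ^ n / (2 * (1 - Real.cos θ) + s) ^ k := by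
    apply Continuous.div (by fun_prop) (by fun_prop)
    intro θ; exact pow_ne_zero _ (ha0 θ).ne'
  have hcg : Continuous fun θ : ℝ => Real.cos θ * Real.sin θ ^ n / s ^ k := by fun_prop
  have hzg : (∫ θ in (0:ℝ)..π, Real.cos θ * Real.sin θ ^ n / s ^ k) = 0 := by
    rw [intervalIntegral.integral_div, zero_int, zero_div]
  have hsplit : (∫ θ in (0:ℝ)..π, Real.cos θ * Real.sin θ ^ n / (2 * (1 - Real.cos θ) + s) ^ k)
      = ∫ θ in (0:ℝ)..π, (Real.cos θ * Real.sin θ ^ n / (2 * (1 - Real.cos θ) + s) ^ k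
          - Real.cos θ * Real.sin θ ^ n / s ^ k) := by
    rw [intervalIntegral.integral_sub (hcf.intervalIntegrable _ _) (hcg.intervalIntegrable _ _), hzg, sub_zero]
  rw [hsplit]
  have hbound : ∀ θ ∈ Set.uIoc (0:ℝ) π,
      ‖Real.cos θ * Real.sin θ ^ n / (2 * (1 - Real.cos θ) + s) ^ k
        - Real.cos θ * Real.sin θ ^ n / s ^ k‖ ≤ 4 * k / s ^ (k + 1) := by
    intro θ _
    have h1 : Real.cos θ * Real.sin θ ^ n / (2 * (1 - Real.cos θ) + s) ^ k
        - Real.cos θ * Real.sin θ ^ n / s ^ k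
        = Real.cos θ * Real.sin θ ^ n * (1 / (2 * (1 - Real.cos θ) + s) ^ k - 1 / s ^ k) := by
      field_simp
    rw [h1, Real.norm_eq_abs, abs_mul]
    have h2 : |Real.cos θ * Real.sin θ ^ n| ≤ 1 := by
      rw [abs_mul, abs_pow]
      have := Real.abs_cos_le_one θ
      have h3 : |Real.sin θ| ^ n ≤ 1 := pow_le_one₀ (abs_nonneg _) (Real.abs_sin_le_one θ)
      nlinarith [abs_nonneg (Real.cos θ), pow_nonneg (abs_nonneg (Real.sin θ)) n]
    have hle : 1 / (2 * (1 - Real.cos θ) + s) ^ k ≤ 1 / s ^ k := by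
      apply one_div_le_one_div_of_le (pow_pos hs0 k)
      exact pow_le_pow_left₀ hs0.le (haS θ) k
    have h4 : |1 / (2 * (1 - Real.cos θ) + s) ^ k - 1 / s ^ k|
        = 1 / s ^ k - 1 / (2 * (1 - Real.cos θ) + s) ^ k := by
      rw [abs_sub_comm, abs_of_nonneg (by linarith)]
    rw [h4]
    have h5 := pow_diff k s (2 * (1 - Real.cos θ) + s) hs (haS θ) (ha4 θ)
    have h6 : (0:ℝ) ≤ 1 / s ^ k - 1 / (2 * (1 - Real.cos θ) + s) ^ k := by linarith
    nlinarith
  have := intervalIntegral.norm_integral_le_of_norm_le_const hbound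
  rw [Real.norm_eq_abs] at this
  calc |∫ θ in (0:ℝ)..π, (Real.cos θ * Real.sin θ ^ n / (2 * (1 - Real.cos θ) + s) ^ k
          - Real.cos θ * Real.sin θ ^ n / s ^ k)|
      ≤ 4 * k / s ^ (k + 1) * |π - 0| := this
    _ = 4 * π * k / s ^ (k + 1) := by
        rw [sub_zero, abs_of_nonneg hpi.le]; ring
end

section
/- Let f ∈ L¹(ℝ²) ∩ L^∞(ℝ²) and let K : ℝ² → ℝ satisfy |K(x)| ≤ C₀ / |x - x₀| for all x ∈ ℝ² and some point x₀ ∈ ℝ² and constant C₀ > 0. Then |∫_{ℝ²} K(x) f(x) dx| ≤ 2√(2π) C₀ ‖f‖_{L¹(ℝ²)}^{1/2} ‖f‖_{L^∞(ℝ²)}^{1/2}. -/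
open MeasureTheory Set Metric Real
open scoped ENNReal NNReal

local notation "E2" => EuclideanSpace ℝ (Fin 2)

lemma ball_vol (r : ℝ) : volume (ball (0 : E2) r) = ENNReal.ofReal r ^ 2 * ENNReal.ofReal π := by
  rw [EuclideanSpace.volume_ball]
  norm_num [Real.Gamma_two, Real.sq_sqrt Real.pi_pos.le]

lemma invsq (t : ℝ) (ht : 0 < t) : t⁻¹ ^ 2 = t ^ (-2:ℝ) := by
  have h2 : (-2:ℝ) = -((2:ℕ):ℝ) := by norm_num
  rw [h2, Real.rpow_neg ht.le, Real.rpow_natCast, inv_pow]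

lemma lintegA {R : ℝ} (hR : 0 < R) :
    ∫⁻ x in ball (0 : E2) R, ENNReal.ofReal ‖x‖⁻¹ = ENNReal.ofReal (2 * π * R) := by
  have key := lintegral_eq_lintegral_meas_lt (volume.restrict (ball (0 : E2) R))
    (Filter.Eventually.of_forall fun x => inv_nonneg.2 (norm_nonneg x))
    ((measurable_norm.inv).aemeasurable)
  rw [key]
  have hmeas : ∀ t : ℝ, 0 < t →
      (volume.restrict (ball (0 : E2) R)) {a : E2 | t < ‖a‖⁻¹}
        = ENNReal.ofReal (min R t⁻¹) ^ 2 * ENNReal.ofReal π := by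
    intro t ht
    have hset : {a : E2 | t < ‖a‖⁻¹} = ball (0 : E2) t⁻¹ \ {0} := by
      ext a
      rcases eq_or_ne a 0 with rfl | ha
      · simp [ht.not_gt, ht]
      · have h0 : 0 < ‖a‖ := norm_pos_iff.2 ha
        simp only [mem_setOf_eq, mem_diff, mem_ball, dist_zero_right, mem_singleton_iff, ha,
          not_false_iff, and_true]
        rw [lt_inv_comm₀ ht h0]
    rw [Measure.restrict_apply (by rw [hset]; exact measurableSet_ball.diff (measurableSet_singleton _)),
      hset]
    have : ball (0 : E2) R ∩ (ball (0 : E2) t⁻¹ \ {0}) = ball (0 : E2) (min R t⁻¹) \ {0} := by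
      ext a; simp only [mem_inter_iff, mem_diff, mem_ball, dist_zero_right, mem_singleton_iff,
        lt_min_iff]
      tauto
    rw [inter_comm, this, measure_diff_null (measure_singleton _), ball_vol]
  rw [setLIntegral_congr_fun measurableSet_Ioi
    (fun t (ht : t ∈ Ioi (0:ℝ)) => hmeas t ht)]
  have hc : (0:ℝ) < R⁻¹ := inv_pos.2 hR
  rw [← Ioc_union_Ioi_eq_Ioi hc.le,
    lintegral_union measurableSet_Ioi (Ioc_disjoint_Ioi le_rfl)]
  have h1 : ∫⁻ t in Ioc (0:ℝ) R⁻¹, ENNReal.ofReal (min R t⁻¹) ^ 2 * ENNReal.ofReal π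
      = ENNReal.ofReal (π * R) := by
    have : ∀ t ∈ Ioc (0:ℝ) R⁻¹, ENNReal.ofReal (min R t⁻¹) ^ 2 * ENNReal.ofReal π
        = ENNReal.ofReal (R ^ 2 * π) := by
      intro t ht
      have hmin : min R t⁻¹ = R := min_eq_left ((le_inv_comm₀ hR ht.1).2 ht.2)
      rw [hmin, ← ENNReal.ofReal_pow hR.le, ← ENNReal.ofReal_mul (by positivity)]
    rw [setLIntegral_congr_fun measurableSet_Ioc this,
      setLIntegral_const, Real.volume_Ioc, ← ENNReal.ofReal_mul (by positivity)]
    congr 1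
    field_simp
    ring
  have h2 : ∫⁻ t in Ioi R⁻¹, ENNReal.ofReal (min R t⁻¹) ^ 2 * ENNReal.ofReal π
      = ENNReal.ofReal (π * R) := by
    have heq : ∀ t ∈ Ioi R⁻¹, ENNReal.ofReal (min R t⁻¹) ^ 2 * ENNReal.ofReal π
        = ENNReal.ofReal (π * (t⁻¹) ^ 2) := by
      intro t ht
      have ht0 : (0:ℝ) < t := hc.trans ht
      have hmin : min R t⁻¹ = t⁻¹ := min_eq_right (((inv_le_comm₀ ht0 hR).2 (le_of_lt ht)))
      rw [hmin, ← ENNReal.ofReal_pow (by positivity), ← ENNReal.ofReal_mul (by positivity), mul_comm]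
    rw [setLIntegral_congr_fun measurableSet_Ioi heq]
    have hInt : IntegrableOn (fun t : ℝ => π * (t⁻¹) ^ 2) (Ioi R⁻¹) := by
      apply Integrable.const_mul
      apply (integrableOn_Ioi_rpow_of_lt (by norm_num : (-2:ℝ) < -1) hc).congr_fun
        (fun t ht => ?_) measurableSet_Ioi
      have ht0 : (0:ℝ) < t := hc.trans ht
      exact (invsq t ht0).symm
    rw [← ofReal_integral_eq_lintegral_ofReal hInt
      (Filter.Eventually.of_forall fun t => by positivity)]
    congr 1
    rw [MeasureTheory.integral_const_mul]
    have : ∫ t in Ioi R⁻¹, (t⁻¹) ^ 2 = ∫ t in Ioi R⁻¹, t ^ (-2:ℝ) := by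
      apply setIntegral_congr_fun measurableSet_Ioi
      intro t ht
      have ht0 : (0:ℝ) < t := hc.trans ht
      exact invsq t ht0
    rw [this, integral_Ioi_rpow_of_lt (by norm_num : (-2:ℝ) < -1) hc]
    rw [show (-2:ℝ) + 1 = -1 by norm_num, Real.rpow_neg_one, inv_inv]
    field_simp
  rw [h1, h2, ← ENNReal.ofReal_add (by positivity) (by positivity)]
  congr 1
  ring

lemma lintegA' (x₀ : E2) {R : ℝ} (hR : 0 < R) :
    ∫⁻ x in ball x₀ R, ENNReal.ofReal ‖x - x₀‖⁻¹ = ENNReal.ofReal (2 * π * R) := by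
  have h := (measurePreserving_add_right volume x₀).setLIntegral_comp_preimage_emb
    (MeasurableEquiv.addRight x₀).measurableEmbedding
    (fun x => ENNReal.ofReal ‖x - x₀‖⁻¹) (ball x₀ R)
  rw [← h]
  have hpre : ((fun a : E2 => a + x₀) ⁻¹' ball x₀ R) = ball (0 : E2) R := by
    ext a
    simp [mem_ball, dist_eq_norm]
  rw [hpre]
  simp only [add_sub_cancel_right]
  exact lintegA hR

theorem stmt_8 (f K : EuclideanSpace ℝ (Fin 2) → ℝ) (x₀ : EuclideanSpace ℝ (Fin 2))
    (C₀ : ℝ) (hC₀ : 0 < C₀)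
    (hf1 : Integrable f) (hfinf : MemLp f ⊤)
    (hK : Measurable K)
    (hKbd : ∀ x, |K x| ≤ C₀ / ‖x - x₀‖) :
    |∫ x, K x * f x| ≤ 2 * Real.sqrt (2 * Real.pi) * C₀ *
      (eLpNorm f 1 volume).toReal ^ ((1 : ℝ) / 2) *
      (eLpNorm f ⊤ volume).toReal ^ ((1 : ℝ) / 2) := by
  have hfm : AEStronglyMeasurable f volume := hf1.1
  have hzero : (f =ᵐ[volume] 0) → |∫ x, K x * f x| ≤ 2 * Real.sqrt (2 * Real.pi) * C₀ *
      (eLpNorm f 1 volume).toReal ^ ((1 : ℝ) / 2) *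
      (eLpNorm f ⊤ volume).toReal ^ ((1 : ℝ) / 2) := by
    intro hf0
    have h0 : ∫ x, K x * f x = 0 := by
      rw [integral_congr_ae (g := fun _ => (0:ℝ)) (by filter_upwards [hf0] with x hx; simp [hx]),
        integral_zero]
    rw [h0, abs_zero]
    positivity
  by_cases hL0 : eLpNorm f 1 volume = 0
  · exact hzero ((eLpNorm_eq_zero_iff hfm one_ne_zero).1 hL0)
  by_cases hM0 : eLpNorm f ⊤ volume = 0
  · exact hzero ((eLpNorm_eq_zero_iff hfm ENNReal.top_ne_zero).1 hM0)
  have hL : eLpNorm f 1 volume ≠ ⊤ := (memLp_one_iff_integrable.mpr hf1).2.ne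
  have hM : eLpNorm f ⊤ volume ≠ ⊤ := hfinf.2.ne
  set Lr := (eLpNorm f 1 volume).toReal with hLrdef
  set Mr := (eLpNorm f ⊤ volume).toReal with hMrdef
  have hLr : 0 < Lr := ENNReal.toReal_pos hL0 hL
  have hMr : 0 < Mr := ENNReal.toReal_pos hM0 hM
  set p2 := Real.sqrt (2 * π) with hp2def
  set s := Real.sqrt Lr with hsdef
  set m := Real.sqrt Mr with hmdef
  have hp2 : 0 < p2 := Real.sqrt_pos.2 (by positivity)
  have hs : 0 < s := Real.sqrt_pos.2 hLr
  have hm : 0 < m := Real.sqrt_pos.2 hMr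
  set R := s / (p2 * m) with hRdef
  have hR : 0 < R := by positivity
  -- ball piece
  have hball : ∫⁻ x in ball x₀ R, ENNReal.ofReal ‖K x * f x‖
      ≤ ENNReal.ofReal (C₀ * (2 * π * R) * Mr) := by
    have hfae : ∀ᵐ x ∂volume, (‖f x‖₊ : ℝ≥0∞) ≤ eLpNorm f ⊤ volume := by
      rw [eLpNorm_exponent_top]
      exact ae_le_eLpNormEssSup
    have hle : ∀ᵐ x ∂(volume.restrict (ball x₀ R)), ENNReal.ofReal ‖K x * f x‖
        ≤ ENNReal.ofReal C₀ * ENNReal.ofReal ‖x - x₀‖⁻¹ * eLpNorm f ⊤ volume := by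
      filter_upwards [ae_restrict_of_ae hfae] with x hx
      have h1 : ENNReal.ofReal ‖K x * f x‖ = ENNReal.ofReal |K x| * (‖f x‖₊ : ℝ≥0∞) := by
        rw [← enorm_eq_nnnorm, ← ofReal_norm, ← ENNReal.ofReal_mul (abs_nonneg _)]
        congr 1
        rw [Real.norm_eq_abs, Real.norm_eq_abs, abs_mul]
      rw [h1]
      refine mul_le_mul ?_ hx zero_le zero_le
      rw [← ENNReal.ofReal_mul hC₀.le]
      exact ENNReal.ofReal_le_ofReal ((hKbd x).trans (le_of_eq (div_eq_mul_inv _ _)))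
    calc ∫⁻ x in ball x₀ R, ENNReal.ofReal ‖K x * f x‖
        ≤ ∫⁻ x in ball x₀ R, ENNReal.ofReal C₀ * ENNReal.ofReal ‖x - x₀‖⁻¹ * eLpNorm f ⊤ volume :=
          lintegral_mono_ae hle
      _ = ENNReal.ofReal C₀ * (∫⁻ x in ball x₀ R, ENNReal.ofReal ‖x - x₀‖⁻¹) * eLpNorm f ⊤ volume := by
          rw [lintegral_mul_const' _ _ hM]
          congr 1
          exact lintegral_const_mul' _ _ ENNReal.ofReal_ne_top
      _ = ENNReal.ofReal C₀ * ENNReal.ofReal (2 * π * R) * ENNReal.ofReal Mr := by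
          rw [lintegA' x₀ hR,
            show eLpNorm f ⊤ volume = ENNReal.ofReal Mr from (ENNReal.ofReal_toReal hM).symm]
      _ = ENNReal.ofReal (C₀ * (2 * π * R) * Mr) := by
          rw [← ENNReal.ofReal_mul hC₀.le, ← ENNReal.ofReal_mul (by positivity)]
  -- complement piece
  have hcompl : ∫⁻ x in (ball x₀ R)ᶜ, ENNReal.ofReal ‖K x * f x‖
      ≤ ENNReal.ofReal (C₀ / R * Lr) := by
    have hle : ∀ᵐ x ∂(volume.restrict (ball x₀ R)ᶜ), ENNReal.ofReal ‖K x * f x‖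
        ≤ ENNReal.ofReal (C₀ / R) * (‖f x‖₊ : ℝ≥0∞) := by
      filter_upwards [ae_restrict_mem measurableSet_ball.compl] with x hx
      simp only [mem_compl_iff, mem_ball, dist_eq_norm, not_lt] at hx
      have hKx : |K x| ≤ C₀ / R := (hKbd x).trans (by gcongr)
      rw [← enorm_eq_nnnorm, ← ofReal_norm, ← ENNReal.ofReal_mul (by positivity)]
      refine ENNReal.ofReal_le_ofReal ?_
      rw [Real.norm_eq_abs, Real.norm_eq_abs, abs_mul]
      exact mul_le_mul_of_nonneg_right hKx (abs_nonneg _)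
    calc ∫⁻ x in (ball x₀ R)ᶜ, ENNReal.ofReal ‖K x * f x‖
        ≤ ∫⁻ x in (ball x₀ R)ᶜ, ENNReal.ofReal (C₀ / R) * (‖f x‖₊ : ℝ≥0∞) :=
          lintegral_mono_ae hle
      _ = ENNReal.ofReal (C₀ / R) * ∫⁻ x in (ball x₀ R)ᶜ, (‖f x‖₊ : ℝ≥0∞) :=
          lintegral_const_mul' _ _ ENNReal.ofReal_ne_top
      _ ≤ ENNReal.ofReal (C₀ / R) * eLpNorm f 1 volume := by
          refine mul_le_mul_right ?_ _
          rw [eLpNorm_one_eq_lintegral_enorm]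
          exact setLIntegral_le_lintegral _ _
      _ = ENNReal.ofReal (C₀ / R * Lr) := by
          rw [show eLpNorm f 1 volume = ENNReal.ofReal Lr from (ENNReal.ofReal_toReal hL).symm,
            ← ENNReal.ofReal_mul (by positivity)]
  have htot : ∫⁻ x, ENNReal.ofReal ‖K x * f x‖
      ≤ ENNReal.ofReal (C₀ * (2 * π * R) * Mr + C₀ / R * Lr) := by
    rw [← lintegral_add_compl (fun x => ENNReal.ofReal ‖K x * f x‖)
      (measurableSet_ball : MeasurableSet (ball x₀ R)),
      ENNReal.ofReal_add (by positivity) (by positivity)]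
    exact add_le_add hball hcompl
  calc |∫ x, K x * f x| ≤ (∫⁻ x, ENNReal.ofReal ‖K x * f x‖).toReal := by
        simpa [Real.norm_eq_abs] using norm_integral_le_lintegral_norm (fun x => K x * f x)
    _ ≤ (ENNReal.ofReal (C₀ * (2 * π * R) * Mr + C₀ / R * Lr)).toReal :=
        ENNReal.toReal_mono ENNReal.ofReal_ne_top htot
    _ = C₀ * (2 * π * R) * Mr + C₀ / R * Lr := ENNReal.toReal_ofReal (by positivity)
    _ = 2 * Real.sqrt (2 * π) * C₀ * Lr ^ ((1:ℝ)/2) * Mr ^ ((1:ℝ)/2) := by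
        rw [← Real.sqrt_eq_rpow, ← Real.sqrt_eq_rpow, ← hsdef, ← hmdef, ← hp2def]
        have h2pi : 2 * π = p2 ^ 2 := (Real.sq_sqrt (by positivity)).symm
        have hLs : Lr = s ^ 2 := (Real.sq_sqrt hLr.le).symm
        have hMs : Mr = m ^ 2 := (Real.sq_sqrt hMr.le).symm
        rw [hRdef, h2pi, hLs, hMs]
        field_simp
        ring
end
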